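/- For every n ≥ 2, the chromatic number γ_n of the n-dimensional cyclohedron satisfies α_{n−1} + 1 ≤ γ_n ≤ α_{n−1} + n, where α_{n−1} is the chromatic number of the (n−1)-dimensional associahedron. -/

import Mathlib

/-- A segment of `[n]₀ = {0,...,n}`: a set `[a,b] = {x : a ≤ x ≤ b}` with
`0 ≤ a ≤ b ≤ n` that is a proper subset of `[n]₀`. -/
def IsSegment (n : ℕ) (S : Finset ℕ) : Prop :=
  ∃ a b : ℕ, a ≤ b ∧ b ≤ n ∧ S = Finset.Icc a b ∧ S ⊂ Finset.range (n + 1)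

/-- The segment `[a,b]` precedes the segment `[c,d]` when `a+1 ≤ c ≤ b+1` and `b < d`. -/
def SegPrecedes (n : ℕ) (S T : Finset ℕ) : Prop :=
  ∃ a b c d : ℕ, a ≤ b ∧ b ≤ n ∧ c ≤ d ∧ d ≤ n ∧
    S = Finset.Icc a b ∧ T = Finset.Icc c d ∧ a + 1 ≤ c ∧ c ≤ b + 1 ∧ b < d

/-- Two segments are separated when one of them precedes the other. -/
def SegSeparated (n : ℕ) (S T : Finset ℕ) : Prop :=
  SegPrecedes n S T ∨ SegPrecedes n T S

/-- A proper colouring of the `n`-dimensional associahedron with `m` colours: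
a function from the segments of `[n]₀` to `{1,...,m}` such that any two distinct
segments of the same colour are separated. -/
def IsProperColouringAssoc (n m : ℕ) (f : Finset ℕ → ℕ) : Prop :=
  (∀ S, IsSegment n S → f S ∈ Finset.Icc 1 m) ∧
  ∀ S T, IsSegment n S → IsSegment n T → S ≠ T → f S = f T → SegSeparated n S T

/-- The chromatic number `α_n` of the `n`-dimensional associahedron: the least `m`
for which a proper colouring with `m` colours exists. -/
noncomputable def assocChromatic (n : ℕ) : ℕ :=
  sInf {m : ℕ | ∃ f : Finset ℕ → ℕ, IsProperColouringAssoc n m f}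

/-- The cyclic segment `[a,b]` of `[n]₀ = {0,...,n}`: the set
`{i : a ≤ i ≤ b}` if `a ≤ b`, and `{i : a ≤ i ≤ n} ∪ {i : 0 ≤ i ≤ b}` if `a > b`. -/
def CSeg (n a b : ℕ) : Finset ℕ :=
  if a ≤ b then Finset.Icc a b else Finset.Icc a n ∪ Finset.Icc 0 b

/-- `(a, b)` are the endpoints of a genuine cyclic segment of `[n]₀`: `a, b ∈ [n]₀`
and `[a,b]` is a proper subset of `[n]₀`. -/
def IsCSeg (n a b : ℕ) : Prop :=
  a ≤ n ∧ b ≤ n ∧ CSeg n a b ⊂ Finset.range (n + 1)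

/-- `[c,d]` overlaps `[a,b]`: `c > a` and the two cyclic segments are neither disjoint
nor comparable with respect to inclusion. -/
def COverlaps (n a b c d : ℕ) : Prop :=
  c > a ∧ (CSeg n a b ∩ CSeg n c d).Nonempty ∧
    ¬ CSeg n a b ⊆ CSeg n c d ∧ ¬ CSeg n c d ⊆ CSeg n a b

/-- `[c,d]` follows `[a,b]`: `b ⊞ 1 = c`, where `⊞` is addition modulo `n + 1`. -/
def CFollows (n a b c d : ℕ) : Prop :=
  (b + 1) % (n + 1) = c

/-- `[a,b]` precedes `[c,d]`: `[c,d]` overlaps `[a,b]` or `[c,d]` follows `[a,b]`. -/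
def CPrecedes (n a b c d : ℕ) : Prop :=
  COverlaps n a b c d ∨ CFollows n a b c d

/-- `X` is a cyclic segment of `[n]₀` (as a set). -/
def IsCSegSet (n : ℕ) (X : Finset ℕ) : Prop :=
  ∃ a b : ℕ, IsCSeg n a b ∧ X = CSeg n a b

/-- Two cyclic segments are separated when one of them precedes the other. -/
def CSegSeparated (n : ℕ) (X Y : Finset ℕ) : Prop :=
  ∃ a b c d : ℕ, IsCSeg n a b ∧ IsCSeg n c d ∧ X = CSeg n a b ∧ Y = CSeg n c d ∧
    (CPrecedes n a b c d ∨ CPrecedes n c d a b)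

/-- A proper colouring of the `n`-dimensional cyclohedron with `m` colours:
a function from the cyclic segments of `[n]₀` to `{1,...,m}` such that any two
distinct cyclic segments of the same colour are separated. -/
def IsProperColouringCyclo (n m : ℕ) (f : Finset ℕ → ℕ) : Prop :=
  (∀ X, IsCSegSet n X → f X ∈ Finset.Icc 1 m) ∧
  ∀ X Y, IsCSegSet n X → IsCSegSet n Y → X ≠ Y → f X = f Y → CSegSeparated n X Y

/-- The chromatic number `γ_n` of the `n`-dimensional cyclohedron. -/
noncomputable def cycloChromatic (n : ℕ) : ℕ :=
  sInf {m : ℕ | ∃ f : Finset ℕ → ℕ, IsProperColouringCyclo n m f}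

/-!
Segments of `[n-1]₀` are cyclic segments of `[n]₀`, and for them cyclic separation is exactly
linear separation. Separated cyclic segments are never nested, so `[0, n-1]` shares its colour
with no segment of `[n-1]₀`; deleting that colour from a colouring of the cyclohedron leaves a
colouring of the associahedron, whence `α_{n-1} + 1 ≤ γ_n`. Conversely, every other cyclic segment
contains `n` or equals `[0, n-1]`, so for `n ≥ 2` two of them of the same size meet without being
nested, i.e. they overlap: colouring them by `α_{n-1} + size` extends a colouring of the
associahedron with `n` new colours.
-/

theorem Finset.Icc_eq_Icc_iff {α : Type*} [PartialOrder α] [LocallyFiniteOrder α] {a b c d : α}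
    (hab : a ≤ b) : Icc a b = Icc c d ↔ a = c ∧ b = d := by
  rw [← coe_inj, coe_Icc, coe_Icc, Set.Icc_eq_Icc_iff hab]

open Finset

lemma cSeg_of_le {n a b : ℕ} (h : a ≤ b) : CSeg n a b = Icc a b := if_pos h

lemma mem_cSeg {n a b x : ℕ} :
    x ∈ CSeg n a b ↔ (a ≤ b → a ≤ x ∧ x ≤ b) ∧ (b < a → a ≤ x ∧ x ≤ n ∨ x ≤ b) := by
  unfold CSeg
  split_ifs with h <;> simp only [mem_union, mem_Icc] <;> omega

lemma add_one_mod_add_one_of_le {n b : ℕ} (hb : b ≤ n) :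
    (b + 1) % (n + 1) = if b < n then b + 1 else 0 := by
  split_ifs with h
  · exact Nat.mod_eq_of_lt (by omega)
  · rw [show b = n by omega, Nat.mod_self]

lemma isCSeg_of_le_of_lt {n a b : ℕ} (hab : a ≤ b) (hb : b < n) : IsCSeg n a b := by
  refine ⟨by omega, by omega, (ssubset_iff_of_subset fun x hx => ?_).2 ⟨n, ?_, ?_⟩⟩
  · rw [mem_cSeg] at hx
    rw [mem_range]
    omega
  · exact self_mem_range_succ n
  · rw [mem_cSeg]
    omega

namespace IsCSeg

variable {n a b : ℕ}

lemma left_mem (h : IsCSeg n a b) : a ∈ CSeg n a b := by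
  have := h.1
  rw [mem_cSeg]
  omega

lemma right_mem (h : IsCSeg n a b) : b ∈ CSeg n a b := by
  have := h.2.1
  rw [mem_cSeg]
  omega

lemma succ_right_notMem (h : IsCSeg n a b) : (b + 1) % (n + 1) ∉ CSeg n a b := by
  obtain ⟨ha, hb, hproper⟩ := h
  intro hmem
  refine hproper.ne (Finset.ext fun x => ?_)
  rw [add_one_mod_add_one_of_le hb, mem_cSeg] at hmem
  rw [mem_cSeg, mem_range]
  split_ifs at hmem <;> omega

lemma notMem_of_succ_eq_left {c : ℕ} (h : IsCSeg n a b) (hc : c ≤ n)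
    (hca : (c + 1) % (n + 1) = a) : c ∉ CSeg n a b := by
  obtain ⟨ha, hb, hproper⟩ := h
  intro hmem
  refine hproper.ne (Finset.ext fun x => ?_)
  rw [add_one_mod_add_one_of_le hc] at hca
  rw [mem_cSeg] at hmem
  rw [mem_cSeg, mem_range]
  split_ifs at hca <;> omega

lemma eq_of_cSeg_eq_Icc {c d : ℕ} (h : IsCSeg n a b) (heq : CSeg n a b = Icc c d)
    (hd : d < n) : a = c ∧ b = d := by
  have hab : a ≤ b := by
    by_contra hba
    have hn : n ∈ CSeg n a b := by
      rw [mem_cSeg]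
      have := h.1
      omega
    rw [heq, mem_Icc] at hn
    omega
  rwa [cSeg_of_le hab, Icc_eq_Icc_iff hab] at heq

end IsCSeg

lemma CPrecedes.not_subset {n a b c d : ℕ} (hab : IsCSeg n a b) (hcd : IsCSeg n c d)
    (h : CPrecedes n a b c d) : ¬ CSeg n a b ⊆ CSeg n c d ∧ ¬ CSeg n c d ⊆ CSeg n a b := by
  rcases h with ⟨-, -, hXY, hYX⟩ | hfollows
  · exact ⟨hXY, hYX⟩
  · exact ⟨fun hXY => hcd.notMem_of_succ_eq_left hab.2.1 hfollows (hXY hab.right_mem),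
      fun hYX => hab.succ_right_notMem (hfollows ▸ hYX hcd.left_mem)⟩

lemma CSegSeparated.not_subset {n : ℕ} {X Y : Finset ℕ} (h : CSegSeparated n X Y) : ¬ X ⊆ Y := by
  obtain ⟨a, b, c, d, hab, hcd, rfl, rfl, hprec | hprec⟩ := h
  · exact (hprec.not_subset hab hcd).1
  · exact (hprec.not_subset hcd hab).2

lemma cSeg_subset_or_subset_of_left_eq {n a b d : ℕ} (hb : b ≤ n) (hd : d ≤ n) :
    CSeg n a b ⊆ CSeg n a d ∨ CSeg n a d ⊆ CSeg n a b := by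
  by_contra hcon
  simp only [not_or, Finset.not_subset, mem_cSeg] at hcon
  omega

lemma cSegSeparated_of_not_subset {n : ℕ} {X Y : Finset ℕ} (hX : IsCSegSet n X)
    (hY : IsCSegSet n Y) (hinter : (X ∩ Y).Nonempty) (hXY : ¬ X ⊆ Y) (hYX : ¬ Y ⊆ X) :
    CSegSeparated n X Y := by
  obtain ⟨a, b, hab, rfl⟩ := hX
  obtain ⟨c, d, hcd, rfl⟩ := hY
  rcases lt_trichotomy a c with hac | rfl | hca
  · exact ⟨a, b, c, d, hab, hcd, rfl, rfl, .inl (.inl ⟨hac, hinter, hXY, hYX⟩)⟩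
  · exact ((cSeg_subset_or_subset_of_left_eq hab.2.1 hcd.2.1).elim hXY hYX).elim
  · exact ⟨a, b, c, d, hab, hcd, rfl, rfl, .inr (.inl ⟨hca, by rwa [inter_comm], hYX, hXY⟩)⟩

lemma cPrecedes_iff_of_le {n a b c d : ℕ} (hab : a ≤ b) (hb : b < n) (hcd : c ≤ d) :
    CPrecedes n a b c d ↔ a + 1 ≤ c ∧ c ≤ b + 1 ∧ b < d := by
  rw [CPrecedes, COverlaps, CFollows, cSeg_of_le hab, cSeg_of_le hcd, Icc_subset_Icc_iff hab,
    Icc_subset_Icc_iff hcd, Nat.mod_eq_of_lt (by omega)]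
  constructor
  · rintro (⟨hac, ⟨x, hx⟩, -, hdb⟩ | hc)
    · rw [mem_inter, mem_Icc, mem_Icc] at hx
      omega
    · omega
  · intro h
    rcases h.2.1.lt_or_eq with hcb | hcb
    · exact .inl ⟨by omega, ⟨c, by rw [mem_inter, mem_Icc, mem_Icc]; omega⟩, by omega, by omega⟩
    · exact .inr hcb.symm

lemma cSegSeparated_Icc_iff {n a b c d : ℕ} (hab : a ≤ b) (hb : b < n) (hcd : c ≤ d)
    (hd : d < n) :
    CSegSeparated n (Icc a b) (Icc c d) ↔
      (a + 1 ≤ c ∧ c ≤ b + 1 ∧ b < d) ∨ (c + 1 ≤ a ∧ a ≤ d + 1 ∧ d < b) := by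
  rw [← cPrecedes_iff_of_le hab hb hcd, ← cPrecedes_iff_of_le hcd hd hab]
  constructor
  · rintro ⟨a', b', c', d', hab', hcd', hX, hY, hprec⟩
    obtain ⟨rfl, rfl⟩ := hab'.eq_of_cSeg_eq_Icc hX.symm hb
    obtain ⟨rfl, rfl⟩ := hcd'.eq_of_cSeg_eq_Icc hY.symm hd
    exact hprec
  · exact fun hprec => ⟨a, b, c, d, isCSeg_of_le_of_lt hab hb, isCSeg_of_le_of_lt hcd hd,
      (cSeg_of_le hab).symm, (cSeg_of_le hcd).symm, hprec⟩

lemma segPrecedes_Icc_iff {k a b c d : ℕ} (hab : a ≤ b) (hb : b ≤ k) (hcd : c ≤ d) (hd : d ≤ k) :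
    SegPrecedes k (Icc a b) (Icc c d) ↔ a + 1 ≤ c ∧ c ≤ b + 1 ∧ b < d := by
  constructor
  · rintro ⟨a', b', c', d', -, -, -, -, hX, hY, hprec⟩
    obtain ⟨rfl, rfl⟩ := (Icc_eq_Icc_iff hab).1 hX
    obtain ⟨rfl, rfl⟩ := (Icc_eq_Icc_iff hcd).1 hY
    exact hprec
  · exact fun hprec => ⟨a, b, c, d, hab, hb, hcd, hd, rfl, rfl, hprec⟩

namespace IsSegment

variable {k : ℕ} {S T : Finset ℕ}

lemma ssubset_range (hS : IsSegment k S) : S ⊂ range (k + 1) := by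
  obtain ⟨-, -, -, -, -, h⟩ := hS
  exact h

lemma isCSegSet (hS : IsSegment k S) : IsCSegSet (k + 1) S := by
  obtain ⟨a, b, hab, hb, rfl, -⟩ := hS
  exact ⟨a, b, isCSeg_of_le_of_lt hab (by omega), (cSeg_of_le hab).symm⟩

lemma cSegSeparated_iff (hS : IsSegment k S) (hT : IsSegment k T) :
    CSegSeparated (k + 1) S T ↔ SegSeparated k S T := by
  obtain ⟨a, b, hab, hb, rfl, -⟩ := hS
  obtain ⟨c, d, hcd, hd, rfl, -⟩ := hT
  rw [cSegSeparated_Icc_iff hab (by omega) hcd (by omega), SegSeparated,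
    segPrecedes_Icc_iff hab hb hcd hd, segPrecedes_Icc_iff hcd hd hab hb]

end IsSegment

namespace IsCSegSet

variable {n : ℕ} {X Y : Finset ℕ}

lemma subset_range (hX : IsCSegSet n X) : X ⊆ range (n + 1) := by
  obtain ⟨a, b, hab, rfl⟩ := hX
  exact hab.2.2.subset

lemma card_mem_Icc (hX : IsCSegSet n X) : #X ∈ Icc 1 n := by
  obtain ⟨a, b, hab, rfl⟩ := hX
  have hlt := card_lt_card hab.2.2
  rw [card_range] at hlt
  exact mem_Icc.2 ⟨card_pos.2 ⟨a, hab.left_mem⟩, by omega⟩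

lemma mem_or_eq_range_of_not_isSegment {k : ℕ} (hX : IsCSegSet (k + 1) X)
    (hXs : ¬ IsSegment k X) : k + 1 ∈ X ∨ X = range (k + 1) := by
  obtain ⟨a, b, hab, rfl⟩ := hX
  by_cases hmem : k + 1 ∈ CSeg (k + 1) a b
  · exact .inl hmem
  have hlt : a ≤ b ∧ b ≤ k := by
    rw [mem_cSeg] at hmem
    have := hab.1
    omega
  rw [cSeg_of_le hlt.1] at hXs ⊢
  refine .inr (by_contra fun hne => hXs ⟨a, b, hlt.1, hlt.2, rfl, ?_⟩)
  refine ssubset_of_subset_of_ne (fun x hx => ?_) hne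
  rw [mem_Icc] at hx
  rw [mem_range]
  omega

lemma inter_nonempty_of_not_isSegment {k : ℕ} (hk : 1 ≤ k) (hX : IsCSegSet (k + 1) X)
    (hY : IsCSegSet (k + 1) Y) (hXs : ¬ IsSegment k X) (hYs : ¬ IsSegment k Y)
    (hcard : #X = #Y) (hXY : X ≠ Y) : (X ∩ Y).Nonempty := by
  have hcover : #(range (k + 2)) < #X + #Y → (X ∩ Y).Nonempty :=
    inter_nonempty_of_card_lt_card_add_card hX.subset_range hY.subset_range
  rcases hX.mem_or_eq_range_of_not_isSegment hXs with hXk | rfl <;>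
    rcases hY.mem_or_eq_range_of_not_isSegment hYs with hYk | rfl
  · exact ⟨k + 1, mem_inter.2 ⟨hXk, hYk⟩⟩
  · simp only [card_range] at hcard hcover
    exact hcover (by omega)
  · simp only [card_range] at hcard hcover
    exact hcover (by omega)
  · exact absurd rfl hXY

end IsCSegSet

theorem exists_isProperColouringAssoc (k : ℕ) : ∃ m g, IsProperColouringAssoc k m g := by
  classical
  set P := (range (k + 1)).powerset
  refine ⟨#P, fun S => if h : S ∈ P then P.equivFin ⟨S, h⟩ + 1 else 0,
    fun S hS => ?_, fun S T hS hT hST hcol => absurd ?_ hST⟩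
  · have hSP : S ∈ P := mem_powerset.2 hS.ssubset_range.subset
    rw [mem_Icc]
    dsimp only
    rw [dif_pos hSP]
    omega
  · have hSP : S ∈ P := mem_powerset.2 hS.ssubset_range.subset
    have hTP : T ∈ P := mem_powerset.2 hT.ssubset_range.subset
    dsimp only at hcol
    simp only [dif_pos hSP, dif_pos hTP, add_left_inj, Fin.val_inj, EmbeddingLike.apply_eq_iff_eq,
      Subtype.mk.injEq] at hcol
    exact hcol

open Classical in
theorem IsProperColouringAssoc.isProperColouringCyclo_succ {k m : ℕ} {g : Finset ℕ → ℕ}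
    (hk : 1 ≤ k) (hg : IsProperColouringAssoc k m g) :
    IsProperColouringCyclo (k + 1) (m + (k + 1))
      fun X => if IsSegment k X then g X else m + #X := by
  refine ⟨fun X hX => ?_, fun X Y hX hY hXY hcol => ?_⟩
  · have hcard := mem_Icc.1 hX.card_mem_Icc
    rw [mem_Icc]
    dsimp only
    split_ifs with hXs
    · have := mem_Icc.1 (hg.1 X hXs)
      omega
    · omega
  · have hXcard := mem_Icc.1 hX.card_mem_Icc
    have hYcard := mem_Icc.1 hY.card_mem_Icc
    dsimp only at hcol
    by_cases hXs : IsSegment k X <;> by_cases hYs : IsSegment k Y <;>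
      simp only [hXs, hYs, if_true, if_false] at hcol
    · exact (hXs.cSegSeparated_iff hYs).2 (hg.2 X Y hXs hYs hXY hcol)
    · have := mem_Icc.1 (hg.1 X hXs)
      omega
    · have := mem_Icc.1 (hg.1 Y hYs)
      omega
    · have hcard : #X = #Y := by omega
      exact cSegSeparated_of_not_subset hX hY
        (hX.inter_nonempty_of_not_isSegment hk hY hXs hYs hcard hXY)
        (fun h => hXY (eq_of_subset_of_card_le h hcard.ge))
        (fun h => hXY (eq_of_subset_of_card_le h hcard.le).symm)

theorem assocChromatic_add_one_le {k m : ℕ} {f : Finset ℕ → ℕ}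
    (hf : IsProperColouringCyclo (k + 1) m f) : assocChromatic k + 1 ≤ m := by
  have hZ : IsCSegSet (k + 1) (range (k + 1)) := by
    refine ⟨0, k, isCSeg_of_le_of_lt k.zero_le k.lt_succ_self, ?_⟩
    rw [cSeg_of_le k.zero_le, ← Nat.Ico_zero_eq_range, Ico_add_one_right_eq_Icc]
  have hfZ := mem_Icc.1 (hf.1 _ hZ)
  -- every segment lies in `[0, k]`, and separated cyclic segments are never nested
  have hne : ∀ S, IsSegment k S → f S ≠ f (range (k + 1)) := fun S hS hcol =>
    (hf.2 S _ hS.isCSegSet hZ hS.ssubset_range.ne hcol).not_subset hS.ssubset_range.subset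
  have hg : IsProperColouringAssoc k (m - 1)
      fun S => if f S < f (range (k + 1)) then f S else f S - 1 := by
    refine ⟨fun S hS => ?_, fun S T hS hT hST hcol => ?_⟩
    · have := mem_Icc.1 (hf.1 S hS.isCSegSet)
      have := hne S hS
      rw [mem_Icc]
      dsimp only
      split_ifs <;> omega
    · refine (hS.cSegSeparated_iff hT).1 (hf.2 S T hS.isCSegSet hT.isCSegSet hST ?_)
      have := hne S hS
      have := hne T hT
      dsimp only at hcol
      split_ifs at hcol <;> omega
  have : assocChromatic k ≤ m - 1 := Nat.sInf_le ⟨_, hg⟩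
  omega

/-- Proposition: `α_{n−1} + 1 ≤ γ_n ≤ α_{n−1} + n` for every `n ≥ 2`. -/
theorem cycloChromatic_bounds (n : ℕ) (hn : 2 ≤ n) :
    assocChromatic (n - 1) + 1 ≤ cycloChromatic n ∧
      cycloChromatic n ≤ assocChromatic (n - 1) + n := by
  obtain ⟨k, rfl⟩ : ∃ k, n = k + 1 := ⟨n - 1, by omega⟩
  rw [Nat.add_sub_cancel]
  obtain ⟨g, hg⟩ : ∃ g, IsProperColouringAssoc k (assocChromatic k) g :=
    Nat.sInf_mem (exists_isProperColouringAssoc k)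
  have hext := hg.isProperColouringCyclo_succ (by omega)
  have hcyclo : ∃ m f, IsProperColouringCyclo (k + 1) m f := ⟨_, _, hext⟩
  obtain ⟨f, hf⟩ : ∃ f, IsProperColouringCyclo (k + 1) (cycloChromatic (k + 1)) f :=
    Nat.sInf_mem hcyclo
  exact ⟨assocChromatic_add_one_le hf, Nat.sInf_le ⟨_, hext⟩⟩
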